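/- Let Π = (Σ, ∅) be a signature consisting only of function symbols, φ a Π^C-formula, and C_s ⊆ C a set of constants occurring in φ. Then there exists a UIF_Σ-uniform interpolant ψ of φ w.r.t. C_s which contains only function symbols occurring in φ. -/

import Mathlib

/- Common framework: first-order signatures with designated sets of interpreted symbols,
uninterpreted (extension) function symbols and fresh constants, clauses, flatness/linearity,
instances, locality of theory extensions, (general) uniform interpolants, and a semantic
specification of the symbol-elimination Algorithm 1 of the paper. -/

open FirstOrder FirstOrder.Language

namespace PaperSE

variable {L : FirstOrder.Language.{0, 0}}

/-- A function symbol of `L` together with its arity. Constants are the arity-0 symbols. -/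
abbrev Sym (L : FirstOrder.Language.{0, 0}) : Type := Σ n : ℕ, L.Functions n

/-- Ground terms (no variables; constants are `0`-ary function symbols of `L`). -/
abbrev GTerm (L : FirstOrder.Language.{0, 0}) : Type := L.Term Empty

/-- A ground term viewed as a term with variables from `α`. -/
def GTerm.cast {α : Type} (t : GTerm L) : L.Term α := Term.relabel Empty.elim t

/-- The term `c()` for a constant symbol `c`. -/
def constT (c : L.Functions 0) : GTerm L := Term.func c (fun j => j.elim0)

/- ### Structures, with the interpretation passed explicitly -/

def FunM (M : Type) (S : L.Structure M) {n : ℕ} (f : L.Functions n) (x : Fin n → M) : M := by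
  letI := S; exact Structure.funMap f x

def RelM (M : Type) (S : L.Structure M) {n : ℕ} (r : L.Relations n) (x : Fin n → M) : Prop := by
  letI := S; exact Structure.RelMap r x

def TVal (M : Type) (S : L.Structure M) {α : Type} (v : α → M) (t : L.Term α) : M := by
  letI := S; exact t.realize v

/-- Value of a ground term. -/
def GVal (M : Type) (S : L.Structure M) (t : GTerm L) : M :=
  TVal M S (fun e : Empty => e.elim) t

def RealizeF (M : Type) (S : L.Structure M) {α : Type} (φ : L.Formula α) (v : α → M) : Prop := by
  letI := S; exact φ.Realize v

def RealizeSent (M : Type) (S : L.Structure M) (φ : L.Sentence) : Prop :=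
  RealizeF M S φ (fun e : Empty => e.elim)

def ModelsT (M : Type) (S : L.Structure M) (T : L.Theory) : Prop :=
  ∀ φ ∈ T, RealizeSent M S φ

/- ### Symbols and ground terms occurring in terms and formulas -/

/-- The set of subterms of a term. -/
def subterms {α : Type} : L.Term α → Set (L.Term α)
  | .var a => {Term.var a}
  | .func f ts => insert (Term.func f ts) (⋃ i, subterms (ts i))

/-- The function (and constant) symbols occurring in a term. -/
def termSyms {α : Type} : L.Term α → Set (Sym L)
  | .var _ => ∅
  | .func f ts => insert ⟨_, f⟩ (⋃ i, termSyms (ts i))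

/-- The list of occurrences of variables in a term. -/
def varOccs {α : Type} : L.Term α → List α
  | .var a => [a]
  | .func _ ts => (List.finRange _).flatMap (fun i => varOccs (ts i))

/-- The list of occurrences of constant symbols in a ground term. -/
def constOccs : GTerm L → List (L.Functions 0)
  | .var e => e.elim
  | .func (l := n) f ts =>
      if h : n = 0 then [h ▸ f]
      else (List.finRange n).flatMap (fun i => constOccs (ts i))

/-- Does the term start with a function symbol from `F`? -/
def rootIn (F : Set (Sym L)) {α : Type} : L.Term α → Prop
  | .var _ => False
  | .func f _ => (⟨_, f⟩ : Sym L) ∈ F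

/-- The function (and constant) symbols occurring in a bounded formula. -/
def bfSyms {α : Type} : ∀ {n : ℕ}, L.BoundedFormula α n → Set (Sym L)
  | _, .falsum => ∅
  | _, .equal t u => termSyms t ∪ termSyms u
  | _, .rel _ ts => ⋃ i, termSyms (ts i)
  | _, .imp f g => bfSyms f ∪ bfSyms g
  | _, .all f => bfSyms f

abbrev sentSyms (s : L.Sentence) : Set (Sym L) := bfSyms s

def theorySyms (T : L.Theory) : Set (Sym L) := ⋃ s ∈ T, sentSyms s

/-- The ground terms occurring in a bounded formula. -/
def bfGTerms {α : Type} : ∀ {n : ℕ}, L.BoundedFormula α n → Set (GTerm L)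
  | _, .falsum => ∅
  | _, .equal t u => {g | GTerm.cast g ∈ subterms t ∨ GTerm.cast g ∈ subterms u}
  | _, .rel _ ts => {g | ∃ i, GTerm.cast g ∈ subterms (ts i)}
  | _, .imp f g => bfGTerms f ∪ bfGTerms g
  | _, .all f => bfGTerms f

abbrev sentGTerms (s : L.Sentence) : Set (GTerm L) := bfGTerms s

/- ### Literals and clauses -/

/-- Literals over variables `α`. -/
inductive Lit (L : FirstOrder.Language.{0, 0}) (α : Type) : Type where
  | eq (t u : L.Term α)
  | neq (t u : L.Term α)
  | rel {n : ℕ} (R : L.Relations n) (ts : Fin n → L.Term α)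
  | nrel {n : ℕ} (R : L.Relations n) (ts : Fin n → L.Term α)

namespace Lit

def terms {α : Type} : Lit L α → Set (L.Term α)
  | eq t u => {t, u}
  | neq t u => {t, u}
  | rel _ ts => Set.range ts
  | nrel _ ts => Set.range ts

/-- An atom (positive literal). -/
def Positive {α : Type} : Lit L α → Prop
  | eq _ _ => True
  | rel _ _ => True
  | _ => False

def subst {α β : Type} (σ : α → L.Term β) : Lit L α → Lit L β
  | eq t u => eq (t.subst σ) (u.subst σ)
  | neq t u => neq (t.subst σ) (u.subst σ)
  | rel R ts => rel R (fun i => (ts i).subst σ)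
  | nrel R ts => nrel R (fun i => (ts i).subst σ)

def Realize (M : Type) (S : L.Structure M) {α : Type} (v : α → M) : Lit L α → Prop
  | eq t u => TVal M S v t = TVal M S v u
  | neq t u => TVal M S v t ≠ TVal M S v u
  | rel R ts => RelM M S R (fun i => TVal M S v (ts i))
  | nrel R ts => ¬ RelM M S R (fun i => TVal M S v (ts i))

def syms {α : Type} (l : Lit L α) : Set (Sym L) := ⋃ t ∈ l.terms, termSyms t

end Lit

/-- A (universally closed) clause: a disjunction of literals with variables `Fin nvars`,
viewed as universally quantified. -/
structure Clause (L : FirstOrder.Language.{0, 0}) : Type where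
  nvars : ℕ
  lits : List (Lit L (Fin nvars))

/-- A ground clause: a disjunction of ground literals. -/
abbrev GClause (L : FirstOrder.Language.{0, 0}) : Type := List (Lit L Empty)

def Clause.instantiate (C : Clause L) (σ : Fin C.nvars → GTerm L) : GClause L :=
  C.lits.map (Lit.subst σ)

def Clause.syms (C : Clause L) : Set (Sym L) := ⋃ l ∈ C.lits, Lit.syms l

def GClause.syms (C : GClause L) : Set (Sym L) := ⋃ l ∈ C, Lit.syms l

def GClause.gterms (C : GClause L) : Set (GTerm L) := ⋃ l ∈ C, ⋃ t ∈ Lit.terms l, subterms t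

def ClausesSyms (K : Set (Clause L)) : Set (Sym L) := ⋃ C ∈ K, C.syms

def GSyms (G : Set (GClause L)) : Set (Sym L) := ⋃ C ∈ G, GClause.syms C

def GTerms (G : Set (GClause L)) : Set (GTerm L) := ⋃ C ∈ G, GClause.gterms C

/- ### Satisfaction -/

def ClauseHolds (M : Type) (S : L.Structure M) (C : Clause L) : Prop :=
  ∀ v : Fin C.nvars → M, ∃ l ∈ C.lits, Lit.Realize M S v l

def GClauseHolds (M : Type) (S : L.Structure M) (C : GClause L) : Prop :=
  ∃ l ∈ C, Lit.Realize M S (fun e : Empty => e.elim) l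

def ModelsK (M : Type) (S : L.Structure M) (K : Set (Clause L)) : Prop :=
  ∀ C ∈ K, ClauseHolds M S C

def ModelsG (M : Type) (S : L.Structure M) (G : Set (GClause L)) : Prop :=
  ∀ C ∈ G, GClauseHolds M S C

/-- Satisfiability (in the joint signature) of base theory `T0`, clause set `K`
and ground clauses `G`. -/
def SatTKG (T0 : L.Theory) (K : Set (Clause L)) (G : Set (GClause L)) : Prop :=
  ∃ (M : Type) (_ : Nonempty M) (S : L.Structure M),
    ModelsT M S T0 ∧ ModelsK M S K ∧ ModelsG M S G

/-- `G ⊨_{T0 ∪ K} θ` for a sentence `θ`. -/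
def EntailsC (T0 : L.Theory) (K : Set (Clause L)) (G : Set (GClause L)) (θ : L.Sentence) : Prop :=
  ∀ (M : Type) (S : L.Structure M), Nonempty M →
    ModelsT M S T0 → ModelsK M S K → ModelsG M S G → RealizeSent M S θ

/-- `A ⊨_{T0 ∪ K} θ` for sentences `A`, `θ`. -/
def EntailsS (T0 : L.Theory) (K : Set (Clause L)) (A θ : L.Sentence) : Prop :=
  ∀ (M : Type) (S : L.Structure M), Nonempty M →
    ModelsT M S T0 → ModelsK M S K → RealizeSent M S A → RealizeSent M S θ

/- ### Extension ground terms and instances -/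

/-- `est(K, G)`: the ground terms starting with a function symbol in `F`
occurring in `K` or in `G`. -/
def estKG (F : Set (Sym L)) (K : Set (Clause L)) (G : Set (GClause L)) : Set (GTerm L) :=
  { t | rootIn F t ∧
      ((∃ C ∈ K, ∃ l ∈ C.lits, ∃ s ∈ Lit.terms l, GTerm.cast t ∈ subterms s) ∨
       (∃ C ∈ G, t ∈ GClause.gterms C)) }

/-- `K[Tt]`: the set of ground instances of clauses of `K` all of whose terms starting
with a function symbol in `F` belong to `Tt`. -/
def instancesIn (F : Set (Sym L)) (K : Set (Clause L)) (Tt : Set (GTerm L)) :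
    Set (GClause L) :=
  { D | ∃ C ∈ K, ∃ σ : Fin C.nvars → GTerm L, D = C.instantiate σ ∧
      ∀ t ∈ GClause.gterms (C.instantiate σ), rootIn F t → t ∈ Tt }

/- ### Locality -/

/-- Locality of the extension of the theory `T0` together with base clauses `K0`
by the clauses `K`, with extension symbols `F`. -/
def LocalExt2 (F : Set (Sym L)) (T0 : L.Theory) (K0 K : Set (Clause L)) : Prop :=
  ∀ G : Set (GClause L), G.Finite →
    ((¬ ∃ (M : Type) (_ : Nonempty M) (S : L.Structure M),
        ModelsT M S T0 ∧ ModelsK M S K0 ∧ ModelsK M S K ∧ ModelsG M S G) ↔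
     (¬ ∃ (M : Type) (_ : Nonempty M) (S : L.Structure M),
        ModelsT M S T0 ∧ ModelsK M S K0 ∧
          ModelsG M S (instancesIn F K (estKG F K G) ∪ G)))

/-- Locality of the theory extension `T0 ⊆ T0 ∪ K` with extension symbols `F`. -/
abbrev LocalExt (F : Set (Sym L)) (T0 : L.Theory) (K : Set (Clause L)) : Prop :=
  LocalExt2 F T0 ∅ K

/-- `Ψ`-locality of the theory extension `T0 ⊆ T0 ∪ K` with extension symbols `F`. -/
def PsiLocalExt (F : Set (Sym L)) (T0 : L.Theory) (K : Set (Clause L))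
    (Ψ : Set (GTerm L) → Set (GTerm L)) : Prop :=
  ∀ G : Set (GClause L), G.Finite →
    (¬ SatTKG T0 K G ↔ ¬ SatTKG T0 ∅ (instancesIn F K (Ψ (estKG F K G)) ∪ G))

/- ### Flatness and linearity -/

/-- All symbols occurring directly below a function symbol from `F` are variables. -/
def flatTerm (F : Set (Sym L)) {α : Type} : L.Term α → Prop
  | .var _ => True
  | .func f ts =>
      ((⟨_, f⟩ : Sym L) ∈ F → ∀ i, ∃ a, ts i = Term.var a) ∧ ∀ i, flatTerm F (ts i)

/-- All symbols occurring directly below a function symbol from `F` are constants. -/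
def flatGTerm (F : Set (Sym L)) : GTerm L → Prop
  | .var e => e.elim
  | .func f ts =>
      ((⟨_, f⟩ : Sym L) ∈ F → ∀ i, ∃ c : L.Functions 0, ts i = constT c) ∧
        ∀ i, flatGTerm F (ts i)

def Clause.extTerms (F : Set (Sym L)) (C : Clause L) : Set (L.Term (Fin C.nvars)) :=
  { t | rootIn F t ∧ ∃ l ∈ C.lits, ∃ s ∈ Lit.terms l, t ∈ subterms s }

def Clause.Flat (F : Set (Sym L)) (C : Clause L) : Prop :=
  ∀ l ∈ C.lits, ∀ t ∈ Lit.terms l, flatTerm F t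

def Clause.Linear (F : Set (Sym L)) (C : Clause L) : Prop :=
  (∀ t ∈ C.extTerms F, ∀ u ∈ C.extTerms F,
      (∃ x, x ∈ varOccs t ∧ x ∈ varOccs u) → t = u) ∧
  (∀ t ∈ C.extTerms F, (varOccs t).Nodup)

/-- Every variable occurring in the clause occurs below a function symbol from `F`. -/
def Clause.VarsBelowExt (F : Set (Sym L)) (C : Clause L) : Prop :=
  ∀ x : Fin C.nvars, (∃ l ∈ C.lits, ∃ s ∈ Lit.terms l, x ∈ varOccs s) →
    ∃ t ∈ C.extTerms F, x ∈ varOccs t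

def GClause.extTerms (F : Set (Sym L)) (C : GClause L) : Set (GTerm L) :=
  { t | rootIn F t ∧ t ∈ GClause.gterms C }

def GClause.Flat (F : Set (Sym L)) (C : GClause L) : Prop :=
  ∀ l ∈ C, ∀ t ∈ Lit.terms l, flatGTerm F t

def GClause.Linear (F : Set (Sym L)) (C : GClause L) : Prop :=
  (∀ t ∈ GClause.extTerms F C, ∀ u ∈ GClause.extTerms F C,
      (∃ c, c ∈ constOccs t ∧ c ∈ constOccs u) → t = u) ∧
  (∀ t ∈ GClause.extTerms F C, (constOccs t).Nodup)

/- ### Agreement of structures and (reduct-)embeddings -/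

/-- The two interpretations agree on all relation symbols and on the function symbols in `F`. -/
def AgreeOn (M : Type) (S1 S2 : L.Structure M) (F : Set (Sym L)) : Prop :=
  (∀ (n : ℕ) (f : L.Functions n), (⟨n, f⟩ : Sym L) ∈ F →
      ∀ x : Fin n → M, FunM M S1 f x = FunM M S2 f x) ∧
  (∀ (n : ℕ) (r : L.Relations n) (x : Fin n → M), RelM M S1 r x ↔ RelM M S2 r x)

/-- An embedding of the reducts to the subsignature consisting of all predicate symbols and
the function symbols in `F`: an injective map preserving and reflecting all predicates and
preserving the functions in `F`. -/
structure SubEmb (L : FirstOrder.Language.{0, 0}) (F : Set (Sym L)) (M N : Type)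
    (SM : L.Structure M) (SN : L.Structure N) : Type where
  toFun : M → N
  inj : Function.Injective toFun
  map_fun : ∀ (n : ℕ) (f : L.Functions n), (⟨n, f⟩ : Sym L) ∈ F →
      ∀ x : Fin n → M, toFun (FunM M SM f x) = FunM N SN f (toFun ∘ x)
  map_rel : ∀ (n : ℕ) (r : L.Relations n) (x : Fin n → M),
      RelM M SM r x ↔ RelM N SN r (toFun ∘ x)

/- ### Quantifier elimination and related properties of the base theory -/

/-- `T0` allows quantifier elimination (for formulas over the symbols in `F0`). -/
def HasQE (T0 : L.Theory) (F0 : Set (Sym L)) : Prop :=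
  ∀ (m : ℕ) (φ : L.Formula (Fin m)), bfSyms φ ⊆ F0 →
    ∃ ψ : L.Formula (Fin m), ψ.IsQF ∧ bfSyms ψ ⊆ F0 ∧
      ∀ (M : Type) (S : L.Structure M), Nonempty M → ModelsT M S T0 →
        ∀ v : Fin m → M, (RealizeF M S φ v ↔ RealizeF M S ψ v)

def ModelsLits (M : Type) (S : L.Structure M) (A : List (Lit L Empty)) : Prop :=
  ∀ l ∈ A, Lit.Realize M S (fun e : Empty => e.elim) l

def litListSyms (A : List (Lit L Empty)) : Set (Sym L) := ⋃ l ∈ A, Lit.syms l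

/-- Convexity of a theory (with clause axioms `K`). -/
def Convex (T0 : L.Theory) (K : Set (Clause L)) : Prop :=
  ∀ Γ : List (Lit L Empty), (∀ l ∈ Γ, l.Positive) →
  ∀ (m : ℕ) (s t : Fin (m + 1) → GTerm L),
    (∀ (M : Type) (S : L.Structure M), Nonempty M → ModelsT M S T0 → ModelsK M S K →
        ModelsLits M S Γ → ∃ i, GVal M S (s i) = GVal M S (t i)) →
    ∃ i0, ∀ (M : Type) (S : L.Structure M), Nonempty M → ModelsT M S T0 → ModelsK M S K →
        ModelsLits M S Γ → GVal M S (s i0) = GVal M S (t i0)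

/-- Stable infiniteness. -/
def StablyInfinite (T0 : L.Theory) (K : Set (Clause L)) : Prop :=
  ∀ φ : L.Sentence, φ.IsQF →
    (∃ (M : Type) (_ : Nonempty M) (S : L.Structure M),
        ModelsT M S T0 ∧ ModelsK M S K ∧ RealizeSent M S φ) →
    ∃ (M : Type) (_ : Infinite M) (S : L.Structure M),
        ModelsT M S T0 ∧ ModelsK M S K ∧ RealizeSent M S φ

/-- Equality interpolation (for a convex theory with interpreted symbols `F0`). -/
def EqInterpolating (T0 : L.Theory) (F0 : Set (Sym L)) : Prop :=
  ∀ (A B : List (Lit L Empty)) (a b : L.Functions 0),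
    (⟨0, a⟩ : Sym L) ∉ litListSyms B → (⟨0, b⟩ : Sym L) ∉ litListSyms A →
    (∀ (M : Type) (S : L.Structure M), Nonempty M → ModelsT M S T0 → ModelsLits M S A →
        ModelsLits M S B → GVal M S (constT a) = GVal M S (constT b)) →
    ∃ t : GTerm L, termSyms t ⊆ F0 ∪ (litListSyms A ∩ litListSyms B) ∧
      ∀ (M : Type) (S : L.Structure M), Nonempty M → ModelsT M S T0 → ModelsLits M S A →
        ModelsLits M S B →
          GVal M S (constT a) = GVal M S t ∧ GVal M S t = GVal M S (constT b)

/-- A universal sentence. -/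
def IsUniversalSent (s : L.Sentence) : Prop :=
  ∃ (m : ℕ) (ψ : L.BoundedFormula Empty m), ψ.IsQF ∧ s = ψ.alls

def IsUniversalTheory (T : L.Theory) : Prop := ∀ s ∈ T, IsUniversalSent s

/-- Close the outermost `k` bound variables existentially. -/
def exsTo {m : ℕ} : ∀ {k : ℕ}, L.BoundedFormula Empty (m + k) → L.BoundedFormula Empty m
  | 0, φ => φ
  | _ + 1, φ => exsTo φ.ex

/-- A `∀∃`-sentence. -/
def IsAESent (s : L.Sentence) : Prop :=
  ∃ (m k : ℕ) (ψ : L.BoundedFormula Empty (m + k)), ψ.IsQF ∧ s = (exsTo ψ).alls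

def IsAETheory (T : L.Theory) : Prop := ∀ s ∈ T, IsAESent s

/- ### General uniform interpolants and uniform interpolants (covers) -/

/-- `ψ` is a general uniform interpolant of the ground clause set `G` w.r.t. the theory
`T0 ∪ K` and the symbols in `Keep` (which contains all interpreted symbols, the shared
uninterpreted symbols and the shared constants). -/
def IsGUIg (T0 : L.Theory) (K : Set (Clause L)) (G : Set (GClause L))
    (Keep : Set (Sym L)) (ψ : L.Sentence) : Prop :=
  ψ.IsQF ∧ sentSyms ψ ⊆ Keep ∧ EntailsC T0 K G ψ ∧
  ∀ θ : L.Sentence, θ.IsQF → sentSyms θ ∩ GSyms G ⊆ Keep →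
    EntailsC T0 K G θ → EntailsS T0 K ψ θ

/-- `ψ` is a general uniform interpolant of the ground formula `φ` w.r.t. the theory
`T0 ∪ K` and the symbols in `Keep`. -/
def IsGUIs (T0 : L.Theory) (K : Set (Clause L)) (φ : L.Sentence)
    (Keep : Set (Sym L)) (ψ : L.Sentence) : Prop :=
  ψ.IsQF ∧ sentSyms ψ ⊆ Keep ∧ EntailsS T0 K φ ψ ∧
  ∀ θ : L.Sentence, θ.IsQF → sentSyms θ ∩ sentSyms φ ⊆ Keep →
    EntailsS T0 K φ θ → EntailsS T0 K ψ θ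

/-- `ψ` is a uniform interpolant (cover) of `Γ` w.r.t. the theory `T0 ∪ K`, the set `CC`
of (eliminable) constants and the kept constants `Cs ⊆ CC`; all other symbols are treated
as interpreted. -/
def IsUI (T0 : L.Theory) (K : Set (Clause L)) (CC Cs : Set (Sym L)) (Γ ψ : L.Sentence) : Prop :=
  ψ.IsQF ∧ sentSyms ψ ∩ CC ⊆ Cs ∧ EntailsS T0 K Γ ψ ∧
  ∀ θ : L.Sentence, θ.IsQF → sentSyms θ ∩ sentSyms Γ ∩ CC ⊆ Cs →
    EntailsS T0 K Γ θ → EntailsS T0 K ψ θ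

/- ### The semantic specification of Algorithm 1 -/

/-- The constants occurring in some term of `S` as an argument of a function symbol in `Sigs`. -/
def argConstsOf (Sigs : Set (Sym L)) (S : Set (GTerm L)) : Set (Sym L) :=
  { p | ∃ c : L.Functions 0, p = ⟨0, c⟩ ∧
      ∃ t ∈ S, ∃ (n : ℕ) (f : L.Functions n) (ts : Fin n → GTerm L),
        t = Term.func f ts ∧ (⟨n, f⟩ : Sym L) ∈ Sigs ∧ ∃ i, ts i = constT c }

/-- Semantic specification of the output `Γ` of Algorithm 1, applied to the theory extension
`T0 ∪ K` (extension symbols `F`), the ground clauses `G` and the instantiation terms `Tt`,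
keeping exactly the symbols in `Keep` (all interpreted symbols, the parameters `Sigs` and the
non-eliminated constants):  `Γ` is a ground formula over `Keep` which, on each model of `T0`,
expresses the existence of values for the eliminated constants and for the purified names of
the extension terms (equivalently, of a reinterpretation of the eliminated symbols) satisfying
`K[Tt] ∪ G`. -/
def AlgOneOutput (F : Set (Sym L)) (T0 : L.Theory) (K : Set (Clause L)) (G : Set (GClause L))
    (Tt : Set (GTerm L)) (Keep : Set (Sym L)) (Γ : L.Sentence) : Prop :=
  Γ.IsQF ∧ sentSyms Γ ⊆ Keep ∧
  ∀ (M : Type) (S : L.Structure M), Nonempty M → ModelsT M S T0 →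
    (RealizeSent M S Γ ↔
      ∃ S' : L.Structure M, AgreeOn M S S' Keep ∧
        ModelsG M S' (instancesIn F K Tt) ∧ ModelsG M S' G)

/- ### Implicit definability -/

/-- `f` is implicitly definable w.r.t. `T0 ∪ K` over the symbols in `Pi1`:
any two interpretations (on the same universe) which agree on `Pi1` and are both models
of `T0 ∪ K` interpret `f` in the same way.  (This is the standard semantic rendering of
the definition via renaming the symbols outside `Pi1` to primed copies.) -/
def ImplicitlyDefinable (T0 : L.Theory) (K : Set (Clause L)) (Pi1 : Set (Sym L))
    {n : ℕ} (f : L.Functions n) : Prop :=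
  ∀ (M : Type), Nonempty M → ∀ S1 S2 : L.Structure M,
    AgreeOn M S1 S2 Pi1 →
    ModelsT M S1 T0 → ModelsK M S1 K → ModelsT M S2 T0 → ModelsK M S2 K →
    ∀ x : Fin n → M, FunM M S1 f x = FunM M S2 f x

end PaperSE

/-!
Let `T` be the ground terms of `φ` and `A` the symbols of `φ` other than the eliminated constants.
The interpolant is the disjunction of the equality diagrams, on the `A`-terms of height at most
`|T| + 1`, of the models of `φ`. If `M` satisfies it, some model `N` of `φ` has the same diagram,
and the two are glued on `M ⊕ N`: the terms of `T` whose `N`-value is that of a short `A`-term are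
sent to the `M`-value of that `A`-term, the other terms of `T` keep their `N`-value. The glued
structure agrees with `N` on `φ` and with `M` on every quantifier-free sentence sharing with `φ`
only symbols of `A`, so each such consequence of `φ` holds in `M`.
-/

namespace PaperSE

variable {L : FirstOrder.Language.{0, 0}}

section Terms

variable {α : Type}

lemma self_mem_subterms (t : L.Term α) : t ∈ subterms t := by
  cases t <;> simp [subterms]

lemma subterms_trans {t u s : L.Term α} (hu : u ∈ subterms t) (hs : s ∈ subterms u) :
    s ∈ subterms t := by
  induction t with
  | var a =>
    rw [subterms, Set.mem_singleton_iff] at hu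
    subst hu
    exact hs
  | func f ts ih =>
    simp only [subterms, Set.mem_insert_iff, Set.mem_iUnion] at hu ⊢
    rcases hu with rfl | ⟨i, hi⟩
    · simpa [subterms] using hs
    · exact Or.inr ⟨i, ih i hi⟩

lemma subterms_finite (t : L.Term α) : (subterms t).Finite := by
  induction t with
  | var a => simp [subterms]
  | func f ts ih => exact (Set.finite_iUnion ih).insert _

lemma termSyms_finite (t : L.Term α) : (termSyms t).Finite := by
  induction t with
  | var a => simp [termSyms]
  | func f ts ih => exact (Set.finite_iUnion ih).insert _

lemma mem_termSyms_func {n : ℕ} (f : L.Functions n) (ts : Fin n → L.Term α) :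
    (⟨n, f⟩ : Sym L) ∈ termSyms (Term.func f ts) :=
  Set.mem_insert _ _

lemma termSyms_subset_func {n : ℕ} (f : L.Functions n) (ts : Fin n → L.Term α) (i : Fin n) :
    termSyms (ts i) ⊆ termSyms (Term.func f ts) :=
  (Set.subset_iUnion (fun i => termSyms (ts i)) i).trans (Set.subset_insert _ _)

lemma termSyms_subset_of_mem_subterms {t u : L.Term α} (hu : u ∈ subterms t) :
    termSyms u ⊆ termSyms t := by
  induction t with
  | var a =>
    rw [subterms, Set.mem_singleton_iff] at hu
    rw [hu]
  | func f ts ih =>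
    simp only [subterms, Set.mem_insert_iff, Set.mem_iUnion] at hu
    rcases hu with rfl | ⟨i, hi⟩
    · exact subset_rfl
    · exact (ih i hi).trans (termSyms_subset_func f ts i)

lemma termSyms_relabel {β : Type} (g : α → β) (t : L.Term α) :
    termSyms (t.relabel g) = termSyms t := by
  induction t with
  | var a => rfl
  | func f ts ih => simp only [Term.relabel, termSyms, ih]

lemma GTerm.termSyms_cast (t : GTerm L) : termSyms (GTerm.cast t : L.Term α) = termSyms t :=
  termSyms_relabel _ t

lemma GTerm.cast_injective : Function.Injective (GTerm.cast (L := L) (α := α)) := by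
  intro t
  induction t with
  | var e => exact e.elim
  | func f ts ih =>
    rintro (e | ⟨f', ts'⟩) h
    · exact e.elim
    obtain ⟨rfl, hf, hts⟩ := Term.func.inj h
    cases hf
    congr 1
    funext i
    exact ih i (congrFun (eq_of_heq hts) i)

def unground (t : L.Term (Empty ⊕ Fin 0)) : GTerm L :=
  t.relabel (Sum.elim id Fin.elim0)

lemma cast_unground (t : L.Term (Empty ⊕ Fin 0)) : GTerm.cast (unground t) = t := by
  have h : (Empty.elim ∘ Sum.elim id Fin.elim0 : Empty ⊕ Fin 0 → Empty ⊕ Fin 0) = id := by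
    funext x
    rcases x with e | i
    · exact e.elim
    · exact i.elim0
  simp only [GTerm.cast, unground, Term.relabel_relabel, h, Term.relabel_id]

lemma unground_cast (t : GTerm L) : unground (GTerm.cast t) = t :=
  GTerm.cast_injective (cast_unground _)

end Terms

section GroundTermsOfFormulas

variable {α : Type}

lemma bfSyms_finite {n : ℕ} (χ : L.BoundedFormula α n) : (bfSyms χ).Finite := by
  induction χ with
  | falsum => exact Set.finite_empty
  | equal t u => exact (termSyms_finite t).union (termSyms_finite u)
  | rel R ts => exact Set.finite_iUnion fun i => termSyms_finite (ts i)
  | imp f g ihf ihg => exact ihf.union ihg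
  | all f ih => exact ih

lemma bfGTerms_finite {n : ℕ} (χ : L.BoundedFormula α n) : (bfGTerms χ).Finite := by
  induction χ with
  | falsum => exact Set.finite_empty
  | equal t u =>
    exact ((subterms_finite t).union (subterms_finite u)).preimage
      GTerm.cast_injective.injOn
  | rel R ts =>
    refine (Set.finite_iUnion fun i => subterms_finite (ts i)).preimage
      GTerm.cast_injective.injOn |>.subset ?_
    rintro g ⟨i, hi⟩
    exact Set.mem_iUnion.2 ⟨i, hi⟩
  | imp f g ihf ihg => exact ihf.union ihg
  | all f ih => exact ih

lemma cast_mem_subterms_func {n : ℕ} (f : L.Functions n) (ts : Fin n → GTerm L) (i : Fin n) :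
    (GTerm.cast (ts i) : L.Term α) ∈ subterms (GTerm.cast (Term.func f ts) : L.Term α) := by
  simp only [GTerm.cast, Term.relabel, subterms, Set.mem_insert_iff, Set.mem_iUnion]
  exact Or.inr ⟨i, self_mem_subterms _⟩

lemma mem_bfGTerms_of_func_mem {m n : ℕ} {χ : L.BoundedFormula α m} {f : L.Functions n}
    {ts : Fin n → GTerm L} (h : Term.func f ts ∈ bfGTerms χ) (i : Fin n) :
    ts i ∈ bfGTerms χ := by
  induction χ with
  | falsum => exact h
  | equal t u =>
    exact h.imp (subterms_trans · (cast_mem_subterms_func f ts i))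
      (subterms_trans · (cast_mem_subterms_func f ts i))
  | rel R us =>
    obtain ⟨j, hj⟩ := h
    exact ⟨j, subterms_trans hj (cast_mem_subterms_func f ts i)⟩
  | imp φ ψ ihφ ihψ => exact h.imp ihφ ihψ
  | all φ ih => exact ih h

lemma termSyms_subset_bfSyms {m : ℕ} {χ : L.BoundedFormula α m} {t : GTerm L}
    (h : t ∈ bfGTerms χ) : termSyms t ⊆ bfSyms χ := by
  induction χ with
  | falsum => exact h.elim
  | equal u w =>
    rcases h with h | h
    · exact (GTerm.termSyms_cast t ▸ termSyms_subset_of_mem_subterms h).trans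
        Set.subset_union_left
    · exact (GTerm.termSyms_cast t ▸ termSyms_subset_of_mem_subterms h).trans
        Set.subset_union_right
  | rel R us =>
    obtain ⟨i, hi⟩ := h
    exact (GTerm.termSyms_cast t ▸ termSyms_subset_of_mem_subterms hi).trans
      (Set.subset_iUnion (fun i => termSyms (us i)) i)
  | imp φ ψ ihφ ihψ =>
    rcases h with h | h
    · exact (ihφ h).trans Set.subset_union_left
    · exact (ihψ h).trans Set.subset_union_right
  | all φ ih => exact ih h

end GroundTermsOfFormulas

section Semantics

variable {M N : Type} (SM : L.Structure M) (SN : L.Structure N)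

lemma gVal_func {n : ℕ} (f : L.Functions n) (ts : Fin n → GTerm L) :
    GVal M SM (Term.func f ts) = FunM M SM f fun i => GVal M SM (ts i) := rfl

lemma tVal_cast {α : Type} (v : α → M) (t : GTerm L) :
    TVal M SM v (GTerm.cast t) = GVal M SM t := by
  let _ := SM
  show (t.relabel Empty.elim).realize v = t.realize _
  rw [Term.realize_relabel]
  congr 1
  funext e
  exact e.elim

lemma realizeSent_equal (t u : L.Term (Empty ⊕ Fin 0)) :
    RealizeSent M SM (BoundedFormula.equal t u) ↔
      GVal M SM (unground t) = GVal M SM (unground u) := by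
  rw [← tVal_cast SM (Sum.elim (fun e : Empty => e.elim) (default : Fin 0 → M)), cast_unground,
    ← tVal_cast SM (Sum.elim (fun e : Empty => e.elim) (default : Fin 0 → M)), cast_unground]
  rfl

lemma realizeSent_iff_of_isQF (hnorel : ∀ n, L.Relations n → False) {χ : L.Sentence}
    (hχ : χ.IsQF)
    (h : ∀ t ∈ sentGTerms χ, ∀ u ∈ sentGTerms χ,
      (GVal M SM t = GVal M SM u ↔ GVal N SN t = GVal N SN u)) :
    RealizeSent M SM χ ↔ RealizeSent N SN χ := by
  induction hχ with
  | falsum => exact Iff.rfl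
  | of_isAtomic hat =>
    rcases hat with ⟨t, u⟩ | ⟨R, _⟩
    · have ht : unground t ∈ bfGTerms (t.bdEqual u) :=
        Or.inl (by rw [cast_unground]; exact self_mem_subterms t)
      have hu : unground u ∈ bfGTerms (t.bdEqual u) :=
        Or.inr (by rw [cast_unground]; exact self_mem_subterms u)
      rw [Term.bdEqual, realizeSent_equal, realizeSent_equal]
      exact h _ ht _ hu
    · exact (hnorel _ R).elim
  | imp _ _ ih₁ ih₂ =>
    exact imp_congr (ih₁ fun t ht u hu => h t (Or.inl ht) u (Or.inl hu))
      (ih₂ fun t ht u hu => h t (Or.inr ht) u (Or.inr hu))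

end Semantics

section Connectives

variable {α : Type} {n : ℕ} (φ ψ : L.BoundedFormula α n)

lemma bfSyms_not : bfSyms φ.not = bfSyms φ :=
  Set.union_empty _

lemma bfSyms_sup : bfSyms (φ ⊔ ψ) = bfSyms φ ∪ bfSyms ψ := by
  rw [← bfSyms_not φ]
  rfl

lemma bfSyms_inf : bfSyms (φ ⊓ ψ) = bfSyms φ ∪ bfSyms ψ := by
  show bfSyms (φ.imp ψ.not).not = _
  rw [bfSyms_not, ← bfSyms_not ψ]
  rfl

lemma realizeSent_not {M : Type} (S : L.Structure M) (φ : L.Sentence) :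
    RealizeSent M S φ.not ↔ ¬ RealizeSent M S φ :=
  Iff.rfl

end Connectives

section FiniteConnectives

variable {β : Type} [Finite β] (f : β → L.Sentence)

lemma isQF_iSup (h : ∀ b, (f b).IsQF) : (BoundedFormula.iSup f).IsQF := by
  let _ := Fintype.ofFinite β
  suffices ∀ l : List β, ((l.map f).foldr (· ⊔ ·) ⊥).IsQF from this _
  intro l
  induction l with
  | nil => exact BoundedFormula.isQF_bot
  | cons b l ih => exact (h b).sup ih

lemma isQF_iInf (h : ∀ b, (f b).IsQF) : (BoundedFormula.iInf f).IsQF := by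
  let _ := Fintype.ofFinite β
  suffices ∀ l : List β, ((l.map f).foldr (· ⊓ ·) ⊤).IsQF from this _
  intro l
  induction l with
  | nil => exact BoundedFormula.IsQF.top
  | cons b l ih => exact (h b).inf ih

lemma bfSyms_iSup_subset {Y : Set (Sym L)} (h : ∀ b, bfSyms (f b) ⊆ Y) :
    bfSyms (BoundedFormula.iSup f) ⊆ Y := by
  let _ := Fintype.ofFinite β
  suffices ∀ l : List β, bfSyms ((l.map f).foldr (· ⊔ ·) ⊥) ⊆ Y from this _
  intro l
  induction l with
  | nil => exact Set.empty_subset _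
  | cons b l ih =>
    rw [List.map_cons, List.foldr_cons, bfSyms_sup]
    exact Set.union_subset (h b) ih

lemma bfSyms_iInf_subset {Y : Set (Sym L)} (h : ∀ b, bfSyms (f b) ⊆ Y) :
    bfSyms (BoundedFormula.iInf f) ⊆ Y := by
  let _ := Fintype.ofFinite β
  suffices ∀ l : List β, bfSyms ((l.map f).foldr (· ⊓ ·) ⊤) ⊆ Y from this _
  intro l
  induction l with
  | nil => exact (bfSyms_not _).trans_subset (Set.empty_subset _)
  | cons b l ih =>
    rw [List.map_cons, List.foldr_cons, bfSyms_inf]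
    exact Set.union_subset (h b) ih

variable {M : Type} (S : L.Structure M)

lemma realizeSent_iSup : RealizeSent M S (BoundedFormula.iSup f) ↔ ∃ b, RealizeSent M S (f b) :=
  let _ := S
  Formula.realize_iSup

lemma realizeSent_iInf : RealizeSent M S (BoundedFormula.iInf f) ↔ ∀ b, RealizeSent M S (f b) :=
  let _ := S
  Formula.realize_iInf

end FiniteConnectives

section EqualityDiagrams

variable {K : Type} (SK : L.Structure K)

def eqS (s t : GTerm L) : L.Sentence :=
  BoundedFormula.equal (GTerm.cast s) (GTerm.cast t)

lemma isQF_eqS (s t : GTerm L) : (eqS s t).IsQF :=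
  (BoundedFormula.IsAtomic.equal _ _).isQF

lemma bfSyms_eqS (s t : GTerm L) : bfSyms (eqS s t) = termSyms s ∪ termSyms t := by
  rw [eqS, bfSyms, GTerm.termSyms_cast, GTerm.termSyms_cast]

lemma realizeSent_eqS (s t : GTerm L) :
    RealizeSent K SK (eqS s t) ↔ GVal K SK s = GVal K SK t := by
  rw [eqS, realizeSent_equal, unground_cast, unground_cast]

open Classical in
noncomputable def eqDiagram (S : Finset (GTerm L)) (P : Finset (GTerm L × GTerm L)) :
    L.Sentence :=
  BoundedFormula.iInf fun q : ↥(S ×ˢ S) =>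
    if (q : GTerm L × GTerm L) ∈ P then eqS q.1.1 q.1.2 else (eqS q.1.1 q.1.2).not

lemma realizeSent_eqDiagram (S : Finset (GTerm L)) (P : Finset (GTerm L × GTerm L)) :
    RealizeSent K SK (eqDiagram S P) ↔
      ∀ q ∈ S ×ˢ S, (q ∈ P ↔ GVal K SK q.1 = GVal K SK q.2) := by
  classical
  rw [eqDiagram, realizeSent_iInf, Subtype.forall]
  refine forall₂_congr fun q _ => ?_
  split_ifs with hq
  · simp only [realizeSent_eqS, hq, true_iff]
  · simp only [realizeSent_not, realizeSent_eqS, hq, false_iff]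

open Classical in
noncomputable def eqDiagramCover (φ : L.Sentence) (S : Finset (GTerm L)) : L.Sentence :=
  BoundedFormula.iSup fun P : ↥((S ×ˢ S).powerset.filter fun P => ∃ (N : Type)
      (SN : L.Structure N), RealizeSent N SN φ ∧ RealizeSent N SN (eqDiagram S P)) =>
    eqDiagram S P

variable (φ : L.Sentence) (S : Finset (GTerm L))

lemma isQF_eqDiagramCover : (eqDiagramCover φ S).IsQF := by
  classical
  refine isQF_iSup _ fun P => isQF_iInf _ fun q => ?_
  split_ifs
  · exact isQF_eqS _ _
  · exact (isQF_eqS _ _).not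

lemma bfSyms_eqDiagramCover_subset {Y : Set (Sym L)} (h : ∀ s ∈ S, termSyms s ⊆ Y) :
    bfSyms (eqDiagramCover φ S) ⊆ Y := by
  classical
  refine bfSyms_iSup_subset _ fun P => bfSyms_iInf_subset _ fun ⟨q, hq⟩ => ?_
  obtain ⟨h₁, h₂⟩ := Finset.mem_product.1 hq
  have hq : bfSyms (eqS q.1 q.2) ⊆ Y := by
    rw [bfSyms_eqS]
    exact Set.union_subset (h _ h₁) (h _ h₂)
  split_ifs
  · exact hq
  · exact (bfSyms_not _).trans_subset hq

lemma realizeSent_eqDiagramCover :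
    RealizeSent K SK (eqDiagramCover φ S) ↔
      ∃ (N : Type) (SN : L.Structure N), RealizeSent N SN φ ∧
        ∀ s ∈ S, ∀ s' ∈ S, (GVal K SK s = GVal K SK s' ↔ GVal N SN s = GVal N SN s') := by
  classical
  rw [eqDiagramCover, realizeSent_iSup]
  constructor
  · rintro ⟨⟨P, hP⟩, hK⟩
    obtain ⟨-, N, SN, hφ, hN⟩ := Finset.mem_filter.1 hP
    rw [realizeSent_eqDiagram] at hK hN
    exact ⟨N, SN, hφ, fun s hs s' hs' =>
      have hq := Finset.mem_product.2 ⟨hs, hs'⟩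
      (hK (s, s') hq).symm.trans (hN (s, s') hq)⟩
  · rintro ⟨N, SN, hφ, hagree⟩
    set P := (S ×ˢ S).filter fun q => GVal K SK q.1 = GVal K SK q.2
    have hK : RealizeSent K SK (eqDiagram S P) :=
      (realizeSent_eqDiagram SK S P).2 fun q hq => by simp [P, hq]
    have hN : RealizeSent N SN (eqDiagram S P) :=
      (realizeSent_eqDiagram SN S P).2 fun q hq => by
        obtain ⟨h₁, h₂⟩ := Finset.mem_product.1 hq
        simp [P, hq, hagree _ h₁ _ h₂]
    exact ⟨⟨P, Finset.mem_filter.2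
      ⟨Finset.mem_powerset.2 (Finset.filter_subset _ _), N, SN, hφ, hN⟩⟩, hK⟩

end EqualityDiagrams

section BoundedTerms

def boundedTerms (A : Set (Sym L)) : ℕ → Set (GTerm L)
  | 0 => ∅
  | k + 1 => {t | ∃ (n : ℕ) (f : L.Functions n) (ts : Fin n → GTerm L),
      t = Term.func f ts ∧ (⟨n, f⟩ : Sym L) ∈ A ∧ ∀ i, ts i ∈ boundedTerms A k}

variable {A : Set (Sym L)}

lemma func_mem_boundedTerms_succ {k n : ℕ} {f : L.Functions n} {ts : Fin n → GTerm L}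
    (hf : (⟨n, f⟩ : Sym L) ∈ A) (hts : ∀ i, ts i ∈ boundedTerms A k) :
    Term.func f ts ∈ boundedTerms A (k + 1) :=
  ⟨n, f, ts, rfl, hf, hts⟩

lemma boundedTerms_mono (A : Set (Sym L)) : Monotone (boundedTerms A) := by
  refine monotone_nat_of_le_succ fun k => ?_
  induction k with
  | zero => exact Set.empty_subset _
  | succ k ih =>
    rintro _ ⟨n, f, ts, rfl, hf, hts⟩
    exact func_mem_boundedTerms_succ hf fun i => ih (hts i)

lemma termSyms_subset_of_mem_boundedTerms {k : ℕ} {t : GTerm L}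
    (ht : t ∈ boundedTerms A k) : termSyms t ⊆ A := by
  induction k generalizing t with
  | zero => exact ht.elim
  | succ k ih =>
    obtain ⟨n, f, ts, rfl, hf, hts⟩ := ht
    exact Set.insert_subset hf (Set.iUnion_subset fun i => ih (hts i))

lemma boundedTerms_finite (hA : A.Finite) (k : ℕ) : (boundedTerms A k).Finite := by
  induction k with
  | zero => exact Set.finite_empty
  | succ k ih =>
    refine (hA.biUnion fun p _ => ((Set.Finite.pi fun _ : Fin p.1 => ih).image
      fun ts => Term.func p.2 ts)).subset ?_
    rintro _ ⟨n, f, ts, rfl, hf, hts⟩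
    exact Set.mem_biUnion hf ⟨ts, fun i _ => hts i, rfl⟩

end BoundedTerms

lemma exists_le_ncard_succ_eq {β : Type} {T : Set β} (hT : T.Finite) {D : ℕ → Set β}
    (hD : Monotone D) (hDT : ∀ k, D k ⊆ T) : ∃ k ≤ T.ncard, D (k + 1) = D k := by
  by_contra! hne
  have hcard : ∀ k ≤ T.ncard + 1, k ≤ (D k).ncard := by
    intro k
    induction k with
    | zero => exact fun _ => Nat.zero_le _
    | succ k ih =>
      intro hk
      have hlt : D k ⊂ D (k + 1) := (hD k.le_succ).ssubset_of_ne (hne k (by omega)).symm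
      exact (ih (by omega)).trans_lt (Set.ncard_lt_ncard hlt (hT.subset (hDT _)))
  have := Set.ncard_le_ncard (hDT (T.ncard + 1)) hT
  have := hcard _ le_rfl
  omega

section Gluing

variable {M N : Type} (SM : L.Structure M) (SN : L.Structure N)

/-- `R` collects the terms of `T` whose `N`-value is that of an `A`-term of height at most `k`,
for some `k ≤ |T|` at which these sets stabilise; stability gives closure under the symbols
of `A`. -/
lemma exists_represented_closed (A : Set (Sym L)) {T : Set (GTerm L)} (hT : T.Finite) :
    ∃ R : Set (GTerm L),
      (∀ t ∈ R, ∃ s ∈ boundedTerms A T.ncard, GVal N SN s = GVal N SN t) ∧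
      (∀ t ∈ R, ∀ u ∈ T, GVal N SN u = GVal N SN t → u ∈ R) ∧
      (∀ {n : ℕ} (f : L.Functions n) (ts : Fin n → GTerm L), Term.func f ts ∈ T →
        (⟨n, f⟩ : Sym L) ∈ A → (∀ i, ts i ∈ R) → Term.func f ts ∈ R) := by
  set D : ℕ → Set (GTerm L) :=
    fun k => {t ∈ T | ∃ s ∈ boundedTerms A k, GVal N SN s = GVal N SN t}
  have hD : Monotone D := fun k l hkl t ⟨ht, s, hs, hst⟩ =>
    ⟨ht, s, boundedTerms_mono A hkl hs, hst⟩
  obtain ⟨k, hk, hstable⟩ := exists_le_ncard_succ_eq hT hD fun k => Set.sep_subset _ _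
  refine ⟨D k, ?_, ?_, ?_⟩
  · rintro t ⟨-, s, hs, hst⟩
    exact ⟨s, boundedTerms_mono A hk hs, hst⟩
  · rintro t ⟨-, s, hs, hst⟩ u hu hut
    exact ⟨hu, s, hs, hst.trans hut.symm⟩
  · intro n f ts hfts hf hts
    rw [← hstable]
    choose s hs hst using fun i => (hts i).2
    exact ⟨hfts, Term.func f s, func_mem_boundedTerms_succ hf hs, by simp only [gVal_func, hst]⟩

open Classical in
noncomputable def glueVal (R : Set (GTerm L)) (rep : GTerm L → GTerm L) (t : GTerm L) :
    M ⊕ N :=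
  if t ∈ R then .inl (GVal M SM (rep t)) else .inr (GVal N SN t)

open Classical in
@[reducible]
noncomputable def glueStructure (m₀ : M) (T : Set (GTerm L)) (v : GTerm L → M ⊕ N) :
    L.Structure (M ⊕ N) where
  funMap {n} f x :=
    if h : ∃ ts : Fin n → GTerm L, Term.func f ts ∈ T ∧ ∀ i, x i = v (ts i)
    then v (Term.func f h.choose)
    else .inl (FunM M SM f fun i => Sum.elim id (fun _ => m₀) (x i))
  RelMap _ _ := False

variable (m₀ : M) {T : Set (GTerm L)} (v : GTerm L → M ⊕ N)

open Classical in
lemma funM_glueStructure {n : ℕ} (f : L.Functions n) (x : Fin n → M ⊕ N) :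
    FunM (M ⊕ N) (glueStructure SM m₀ T v) f x =
      if h : ∃ ts : Fin n → GTerm L, Term.func f ts ∈ T ∧ ∀ i, x i = v (ts i)
      then v (Term.func f h.choose)
      else .inl (FunM M SM f fun i => Sum.elim id (fun _ => m₀) (x i)) :=
  rfl

lemma gVal_glueStructure_of_mem
    (hTsub : ∀ {n : ℕ} (f : L.Functions n) ts, Term.func f ts ∈ T → ∀ i, ts i ∈ T)
    (hv : ∀ t ∈ T, ∀ u ∈ T, v t = v u ↔ GVal N SN t = GVal N SN u) {t : GTerm L}
    (ht : t ∈ T) : GVal (M ⊕ N) (glueStructure SM m₀ T v) t = v t := by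
  induction t with
  | var e => exact e.elim
  | func f ts ih =>
    have hex : ∃ us, Term.func f us ∈ T ∧ ∀ i, v (ts i) = v (us i) :=
      ⟨ts, ht, fun _ => rfl⟩
    rw [gVal_func, funext fun i => ih i (hTsub f ts ht i), funM_glueStructure, dif_pos hex]
    obtain ⟨hus, hvus⟩ := hex.choose_spec
    refine (hv _ hus _ ht).2 ?_
    simp only [gVal_func]
    congr 1
    funext i
    exact (hv _ (hTsub f _ hus i) _ (hTsub f ts ht i)).1 (hvus i).symm

lemma gVal_glueStructure_of_syms {A : Set (Sym L)}
    (hvA : ∀ {n : ℕ} (f : L.Functions n) (us : Fin n → GTerm L) (m : Fin n → M),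
      Term.func f us ∈ T → (⟨n, f⟩ : Sym L) ∈ A → (∀ i, v (us i) = .inl (m i)) →
        v (Term.func f us) = .inl (FunM M SM f m))
    {g : GTerm L}
    (hg : ∀ {n : ℕ} (f : L.Functions n) (us : Fin n → GTerm L), Term.func f us ∈ T →
      (⟨n, f⟩ : Sym L) ∈ termSyms g → (⟨n, f⟩ : Sym L) ∈ A) :
    GVal (M ⊕ N) (glueStructure SM m₀ T v) g = .inl (GVal M SM g) := by
  induction g with
  | var e => exact e.elim
  | func f ts ih =>
    have hts : ∀ i, GVal (M ⊕ N) (glueStructure SM m₀ T v) (ts i) = .inl (GVal M SM (ts i)) :=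
      fun i => ih i fun f' us h hs => hg f' us h (termSyms_subset_func f ts i hs)
    rw [gVal_func, funext hts, funM_glueStructure]
    split_ifs with hex
    · obtain ⟨hus, hvus⟩ := hex.choose_spec
      exact hvA f _ _ hus (hg f _ hus (mem_termSyms_func f ts)) fun i => (hvus i).symm
    · rfl

variable {R : Set (GTerm L)} {rep : GTerm L → GTerm L}

lemma glueVal_eq_glueVal_iff {B : Set (GTerm L)}
    (hagree : ∀ s ∈ B, ∀ s' ∈ B,
      (GVal M SM s = GVal M SM s' ↔ GVal N SN s = GVal N SN s'))
    (hrep : ∀ t ∈ R, rep t ∈ B ∧ GVal N SN (rep t) = GVal N SN t)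
    (hR : ∀ t ∈ R, ∀ u ∈ T, GVal N SN u = GVal N SN t → u ∈ R)
    {t u : GTerm L} (ht : t ∈ T) (hu : u ∈ T) :
    glueVal SM SN R rep t = glueVal SM SN R rep u ↔ GVal N SN t = GVal N SN u := by
  by_cases h₁ : t ∈ R <;> by_cases h₂ : u ∈ R <;>
    simp only [glueVal, h₁, h₂, if_true, if_false, Sum.inl.injEq, Sum.inr.injEq, reduceCtorEq,
      false_iff]
  · rw [hagree _ (hrep t h₁).1 _ (hrep u h₂).1, (hrep t h₁).2, (hrep u h₂).2]
  · exact fun h => h₂ (hR t h₁ u hu h.symm)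
  · exact fun h => h₁ (hR u h₂ t ht h)

lemma glueVal_func {A : Set (Sym L)} {d : ℕ}
    (hagree : ∀ s ∈ boundedTerms A (d + 1), ∀ s' ∈ boundedTerms A (d + 1),
      (GVal M SM s = GVal M SM s' ↔ GVal N SN s = GVal N SN s'))
    (hrep : ∀ t ∈ R, rep t ∈ boundedTerms A d ∧ GVal N SN (rep t) = GVal N SN t)
    (happ : ∀ {n : ℕ} (f : L.Functions n) (ts : Fin n → GTerm L), Term.func f ts ∈ T →
      (⟨n, f⟩ : Sym L) ∈ A → (∀ i, ts i ∈ R) → Term.func f ts ∈ R)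
    {n : ℕ} (f : L.Functions n) (us : Fin n → GTerm L) (m : Fin n → M)
    (hus : Term.func f us ∈ T) (hf : (⟨n, f⟩ : Sym L) ∈ A)
    (hm : ∀ i, glueVal SM SN R rep (us i) = .inl (m i)) :
    glueVal SM SN R rep (Term.func f us) = .inl (FunM M SM f m) := by
  have huR : ∀ i, us i ∈ R := fun i => by
    by_contra h
    simpa [glueVal, h] using hm i
  have hm' : ∀ i, GVal M SM (rep (us i)) = m i := fun i => by
    simpa [glueVal, huR i] using hm i
  have hfR := happ f us hus hf huR
  have hN : GVal N SN (rep (Term.func f us)) = GVal N SN (Term.func f fun i => rep (us i)) := by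
    simp only [(hrep _ hfR).2, gVal_func, (hrep _ (huR _)).2]
  rw [glueVal, if_pos hfR, (hagree _ (boundedTerms_mono A d.le_succ (hrep _ hfR).1) _
    (func_mem_boundedTerms_succ hf fun i => (hrep _ (huR i)).1)).2 hN, gVal_func]
  simp only [hm']

end Gluing

theorem exists_glued_structure (hnorel : ∀ n, L.Relations n → False) {M N : Type}
    (SM : L.Structure M) (SN : L.Structure N) (m₀ : M) {T : Set (GTerm L)} (hT : T.Finite)
    (hTsub : ∀ {n : ℕ} (f : L.Functions n) ts, Term.func f ts ∈ T → ∀ i, ts i ∈ T)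
    (A : Set (Sym L))
    (hagree : ∀ s ∈ boundedTerms A (T.ncard + 1), ∀ s' ∈ boundedTerms A (T.ncard + 1),
      (GVal M SM s = GVal M SM s' ↔ GVal N SN s = GVal N SN s')) :
    ∃ S : L.Structure (M ⊕ N),
      (∀ χ : L.Sentence, χ.IsQF → sentGTerms χ ⊆ T →
        (RealizeSent (M ⊕ N) S χ ↔ RealizeSent N SN χ)) ∧
      (∀ θ : L.Sentence, θ.IsQF →
        (∀ {n : ℕ} (f : L.Functions n) ts, Term.func f ts ∈ T →
          (⟨n, f⟩ : Sym L) ∈ sentSyms θ → (⟨n, f⟩ : Sym L) ∈ A) →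
        (RealizeSent (M ⊕ N) S θ ↔ RealizeSent M SM θ)) := by
  obtain ⟨R, hrep, hclosed, happ⟩ := exists_represented_closed SN A hT
  choose! rep hrepA hrepN using hrep
  have hrep : ∀ t ∈ R, rep t ∈ boundedTerms A T.ncard ∧ GVal N SN (rep t) = GVal N SN t :=
    fun t ht => ⟨hrepA t ht, hrepN t ht⟩
  set v := glueVal SM SN R rep
  have hv : ∀ t ∈ T, ∀ u ∈ T, v t = v u ↔ GVal N SN t = GVal N SN u :=
    fun t ht u hu => glueVal_eq_glueVal_iff SM SN hagree
      (fun t ht => ⟨boundedTerms_mono A T.ncard.le_succ (hrep t ht).1, (hrep t ht).2⟩)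
      hclosed ht hu
  refine ⟨glueStructure SM m₀ T v, fun χ hχ hχT => ?_, fun θ hθ hθA => ?_⟩
  · have hN : ∀ t ∈ T, GVal (M ⊕ N) (glueStructure SM m₀ T v) t = v t :=
      fun t ht => gVal_glueStructure_of_mem SM SN m₀ v hTsub hv ht
    refine (realizeSent_iff_of_isQF _ _ hnorel hχ fun t ht u hu => ?_).symm
    rw [← hv t (hχT ht) u (hχT hu), hN t (hχT ht), hN u (hχT hu)]
  · have hM : ∀ g ∈ sentGTerms θ,
        GVal (M ⊕ N) (glueStructure SM m₀ T v) g = .inl (GVal M SM g) :=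
      fun g hg => gVal_glueStructure_of_syms SM m₀ v (glueVal_func SM SN hagree hrep happ)
        fun f us h hs => hθA f us h (termSyms_subset_bfSyms hg hs)
    refine realizeSent_iff_of_isQF _ _ hnorel hθ fun t ht u hu => ?_
    rw [hM t ht, hM u hu]
    exact Sum.inl_injective.eq_iff

theorem uniform_interpolant_no_new_functions_general
    (L : FirstOrder.Language.{0, 0})
    (hnorel : ∀ (n : ℕ), L.Relations n → False)
    (FS CC : Set (Sym L))
    (φ : L.Sentence) (hφ : φ.IsQF)
    (Cs : Set (Sym L)) :
    ∃ ψ : L.Sentence,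
      IsUI (L := L) ∅ ∅ CC Cs φ ψ ∧ sentSyms ψ ∩ FS ⊆ sentSyms φ := by
  set T := sentGTerms φ
  set A := sentSyms φ \ (CC \ Cs)
  set S := (boundedTerms_finite (bfSyms_finite φ).sdiff (T.ncard + 1)).toFinset
  have hψA : sentSyms (eqDiagramCover φ S) ⊆ A := bfSyms_eqDiagramCover_subset φ S
    fun s hs => termSyms_subset_of_mem_boundedTerms (Set.Finite.mem_toFinset _ |>.1 hs)
  refine ⟨eqDiagramCover φ S, ⟨isQF_eqDiagramCover φ S, ?_, ?_, ?_⟩,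
    fun p hp => (hψA hp.1).1⟩
  · exact fun p ⟨hpψ, hpCC⟩ => by_contra fun hpCs => (hψA hpψ).2 ⟨hpCC, hpCs⟩
  · intro K SK _ _ _ hK
    exact (realizeSent_eqDiagramCover SK φ S).2 ⟨K, SK, hK, fun _ _ _ _ => Iff.rfl⟩
  · intro θ hθ hθφ hφθ K SK hK _ _ hψ
    obtain ⟨N, SN, hN, hagree⟩ := (realizeSent_eqDiagramCover SK φ S).1 hψ
    obtain ⟨S', hφS', hθS'⟩ := exists_glued_structure hnorel SK SN hK.some
      (bfGTerms_finite φ) (fun _ _ h i => mem_bfGTerms_of_func_mem h i) A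
      fun s hs s' hs' => hagree s (by simpa [S] using hs) s' (by simpa [S] using hs')
    have hθA : ∀ {n : ℕ} (f : L.Functions n) us, Term.func f us ∈ T →
        (⟨n, f⟩ : Sym L) ∈ sentSyms θ → (⟨n, f⟩ : Sym L) ∈ A := by
      intro n f us hus hfθ
      have hfφ := termSyms_subset_bfSyms hus (mem_termSyms_func f us)
      exact ⟨hfφ, fun hf => hf.2 (hθφ ⟨⟨hfθ, hfφ⟩, hf.1⟩)⟩
    have hθS : RealizeSent (K ⊕ N) S' θ := hφθ _ S' ⟨.inl hK.some⟩ (fun _ h => h.elim)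
      (fun _ h => h.elim) ((hφS' φ hφ subset_rfl).2 hN)
    exact (hθS' θ hθ hθA).1 hθS

/-- Let `Π = (Σ, ∅)` be a signature consisting only of function symbols,
`φ` a ground `Π^C`-formula and `Cs ⊆ C` a set of constants occurring in `φ`.  Then there is a
`UIF_Σ`-uniform interpolant `ψ` of `φ` w.r.t. `Cs` containing only function symbols occurring
in `φ`.  (`UIF_Σ` is the theory of uninterpreted function symbols: the empty theory over the
signature `Σ`; the fresh constants of `C` are the symbols in `CC`.) -/
theorem uniform_interpolant_no_new_functions
    (L : FirstOrder.Language.{0, 0})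
    (hnorel : ∀ (n : ℕ), L.Relations n → False)
    (FS CC : Set (Sym L))
    (hd : Disjoint FS CC) (hcover : FS ∪ CC = Set.univ)
    (hCC0 : ∀ p ∈ CC, p.1 = 0)
    (φ : L.Sentence) (hφ : φ.IsQF)
    (Cs : Set (Sym L)) (hCs : Cs ⊆ CC ∩ sentSyms φ) :
    ∃ ψ : L.Sentence,
      IsUI (L := L) ∅ ∅ CC Cs φ ψ ∧ sentSyms ψ ∩ FS ⊆ sentSyms φ :=
  uniform_interpolant_no_new_functions_general L hnorel FS CC φ hφ Cs

end PaperSE
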